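/- Let F be a field and n ≥ 2. Let w ∈ GL(n+1,F) be the permutation matrix swapping coordinates n and n+1, let γ ∈ GL(n+1,F) be the matrix with I_{n-1} upper-left and lower-right 2×2 block [[1,0],[1,1]], let P(F) ⊆ GL(n+1,F) be the standard parabolic of matrices of block form [[A, b],[0, d]] with A ∈ GL(n,F), b ∈ F^n, d ∈ F^×, and ι(x) = diag(x,1) for x ∈ GL(n,F). Then γ ∉ ι(GL(n,F))·w·P(F); i.e., there exist no x ∈ GL(n,F) and p ∈ P(F) with γ = ι(x)·w·p. -/

import Mathlib

/-- The embedding `x ↦ diag(x, 1)` of `GL(n)` into `GL(n+1)`. -/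
def iota {R : Type*} [CommRing R] {n : ℕ} (x : Matrix (Fin n) (Fin n) R) :
    Matrix (Fin (n + 1)) (Fin (n + 1)) R :=
  Matrix.reindex finSumFinEquiv finSumFinEquiv
    (Matrix.fromBlocks x 0 0 (1 : Matrix (Fin 1) (Fin 1) R))

/-- The permutation matrix in `GL(n+1)` swapping the last two coordinates. -/
def wmat (R : Type*) [CommRing R] (n : ℕ) : Matrix (Fin (n + 1)) (Fin (n + 1)) R :=
  1 + Matrix.single ⟨n - 1, by omega⟩ ⟨n, by omega⟩ 1
    + Matrix.single ⟨n, by omega⟩ ⟨n - 1, by omega⟩ 1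
    - Matrix.single ⟨n - 1, by omega⟩ ⟨n - 1, by omega⟩ 1
    - Matrix.single ⟨n, by omega⟩ ⟨n, by omega⟩ 1

/-- Disjointness of the double cosets: `γ ∉ ι(GL(n,F)) · w · P(F)`. -/
theorem stmt_19 (F : Type*) [Field F] (n : ℕ) (hn : 2 ≤ n) :
    ¬ ∃ (x A : Matrix (Fin n) (Fin n) F) (b : Fin n → F) (d : F),
        IsUnit x.det ∧ IsUnit A.det ∧ d ≠ 0 ∧
        (1 + Matrix.single (⟨n, by omega⟩ : Fin (n + 1)) ⟨n - 1, by omega⟩ (1 : F)) =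
          iota x * wmat F n *
            Matrix.reindex finSumFinEquiv finSumFinEquiv
              (Matrix.fromBlocks A (Matrix.of fun i (_ : Fin 1) => b i) 0
                (Matrix.of fun (_ : Fin 1) (_ : Fin 1) => d)) := by
  
  rintro ⟨x, A, b, d, hx, -, hd, heq⟩
  have hn1 : n - 1 < n := by omega
  set a : Fin (n + 1) := ⟨n - 1, by omega⟩ with ha
  set bb : Fin (n + 1) := ⟨n, by omega⟩ with hbb
  have hab : a ≠ bb := by simp only [ha, hbb, Ne, Fin.mk.injEq]; omega
  set P : Matrix (Fin (n + 1)) (Fin (n + 1)) F :=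
    Matrix.reindex finSumFinEquiv finSumFinEquiv
      (Matrix.fromBlocks A (Matrix.of fun i (_ : Fin 1) => b i) 0
        (Matrix.of fun (_ : Fin 1) (_ : Fin 1) => d)) with hP
  have hsymm1 : ∀ j : Fin n, finSumFinEquiv.symm (Fin.castSucc j) = Sum.inl j := fun j =>
    finSumFinEquiv_symm_apply_castAdd j
  have hsymm2 : finSumFinEquiv.symm bb = Sum.inr 0 := by
    have h : bb = finSumFinEquiv (Sum.inr (0 : Fin 1)) := by
      simp [hbb, Fin.ext_iff]
    rw [h, Equiv.symm_apply_apply]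
  have hPc : ∀ j : Fin n, P (Fin.castSucc j) bb = b j := by
    intro j
    simp [hP, Matrix.reindex_apply, Matrix.submatrix_apply, hsymm1, hsymm2]
  have hPd : P bb bb = d := by
    simp [hP, Matrix.reindex_apply, Matrix.submatrix_apply, hsymm2]
  have hi1 : ∀ i j : Fin n, iota x (Fin.castSucc i) (Fin.castSucc j) = x i j := by
    intro i j
    simp [iota, Matrix.reindex_apply, Matrix.submatrix_apply, hsymm1]
  have hi2 : ∀ i : Fin n, iota x (Fin.castSucc i) bb = 0 := by
    intro i
    simp [iota, Matrix.reindex_apply, Matrix.submatrix_apply, hsymm1, hsymm2]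
  have hw : ∀ (v : Fin (n + 1) → F) (k : Fin (n + 1)),
      (∑ l, wmat F n k l * v l) =
        if k = a then v bb else if k = bb then v a else v k := by
    intro v k
    have expand : ∀ l, wmat F n k l * v l =
        (if k = l then 1 else 0) * v l
        + (if a = k ∧ bb = l then 1 else 0) * v l
        + (if bb = k ∧ a = l then 1 else 0) * v l
        - (if a = k ∧ a = l then 1 else 0) * v l
        - (if bb = k ∧ bb = l then 1 else 0) * v l := by
      intro l
      simp only [wmat, Matrix.add_apply, Matrix.sub_apply, Matrix.one_apply,
        Matrix.single, Matrix.of_apply, ← ha, ← hbb]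
      ring
    simp only [expand, Finset.sum_add_distrib, Finset.sum_sub_distrib, ite_and, boole_mul]
    rcases eq_or_ne a k with h1 | h1 <;> rcases eq_or_ne bb k with h2 | h2
    · exact absurd (h1.trans h2.symm) hab
    · subst h1
      simp [Finset.sum_ite_eq, h2, Ne.symm h2]
    · subst h2
      simp [Finset.sum_ite_eq, h1, Ne.symm h1, hab]
    · simp [Finset.sum_ite_eq, h1, h2, Ne.symm h1, Ne.symm h2]
  set c : Fin n → F := fun j => if j = ⟨n - 1, hn1⟩ then d else b j with hc
  have hmv : x.mulVec c = 0 := by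
    funext i
    have h := congrFun (congrFun heq (Fin.castSucc i)) bb
    have hne : Fin.castSucc i ≠ bb := by
      simp only [Ne, Fin.ext_iff, hbb, Fin.coe_castSucc]
      omega
    have hlhs : (1 + Matrix.single bb a (1 : F)) (Fin.castSucc i) bb = 0 := by
      rw [Matrix.add_apply, Matrix.one_apply_ne hne,
        Matrix.single_apply_of_row_ne (Ne.symm hne)]
      ring
    rw [mul_assoc, Matrix.mul_apply] at h
    have hWP : ∀ k, (wmat F n * P) k bb =
        if k = a then P bb bb else if k = bb then P a bb else P k bb := by
      intro k
      rw [Matrix.mul_apply]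
      exact hw (fun l => P l bb) k
    simp only [hWP] at h
    rw [hlhs] at h
    have hlast : Fin.last n = bb := rfl
    rw [Fin.sum_univ_castSucc, hlast] at h
    have hcj : ∀ j : Fin n,
        (if Fin.castSucc j = a then P bb bb else if Fin.castSucc j = bb then P a bb
          else P (Fin.castSucc j) bb) = c j := by
      intro j
      have h2 : Fin.castSucc j ≠ bb := by
        simp only [Ne, Fin.ext_iff, hbb, Fin.coe_castSucc]; omega
      by_cases h1 : j = ⟨n - 1, hn1⟩
      · subst h1
        have : Fin.castSucc (⟨n - 1, hn1⟩ : Fin n) = a := by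
          simp [Fin.ext_iff, ha]
        simp [this, hPd, hc]
      · have h3 : Fin.castSucc j ≠ a := by
          simp only [Ne, Fin.ext_iff, ha, Fin.coe_castSucc]
          simp only [Ne, Fin.ext_iff] at h1
          omega
        simp [h3, h2, hPc, hc, h1]
    simp only [hcj, hi1, hi2, zero_mul, add_zero] at h
    rw [show x.mulVec c i = ∑ j, x i j * c j from rfl]
    exact h.symm
  have hc0 : c = 0 := by
    have h1 : x⁻¹.mulVec (x.mulVec c) = c := by
      rw [Matrix.mulVec_mulVec, Matrix.nonsing_inv_mul x hx, Matrix.one_mulVec]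
    rw [hmv, Matrix.mulVec_zero] at h1
    exact h1.symm
  have hdz := congrFun hc0 ⟨n - 1, hn1⟩
  simp [hc] at hdz
  exact hd hdz
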